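/- Let C be the category whose objects are G-graded vector spaces V = ⊕_{g∈G} V_g equipped with an α-projective G-action (linear maps f: V → V with f(V_g) = V_{fgf^{-1}} and (fg).v = α(f,g|h)·f.(g.v) for v ∈ V_h), with tensor product graded in the usual way and with action f.(x⊗y) = α(f|g,h)(f.x ⊗ f.y) for x ∈ X_g, y ∈ Y_h, associator given by multiplication by α(f,g,h) on X_f⊗Y_g⊗Z_h, and braiding c(x⊗y) = f.y ⊗ x for x ∈ X_f. Then these data satisfy the hexagon axioms, i.e., C is a braided monoidal category. -/

import Mathlib

/-!
On homogeneous tensors every structure map is a scalar multiple of a permutation of the tensor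
factors followed by the action of `G`, which moves degrees by conjugation. So each axiom, checked
on `x ⊗ y` (or `x ⊗ y ⊗ z`) with homogeneous factors, compares two multiples of the same pure
tensor, and the scalars agree by cancellation in `kˣ`: `α(f|g,h)` and `α(f,g|h)` are exactly the
correction factors that balance the associators appearing in the hexagons.
-/

open scoped BigOperators TensorProduct

/-- `α(f,g|h) = α(f,g,h)⁻¹ · α(f, ghg⁻¹, g) · α((fg)h(fg)⁻¹, f, g)⁻¹`. -/
def aux2 {G : Type} [Group G] {k : Type} [Field k]
    (α : G → G → G → kˣ) (f g h : G) : kˣ :=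
  (α f g h)⁻¹ * α f (g * h * g⁻¹) g * (α ((f * g) * h * (f * g)⁻¹) f g)⁻¹

/-- `α(f|g,h) = α(f,g,h) · α(fgf⁻¹, f, h)⁻¹ · α(fgf⁻¹, fhf⁻¹, f)`. -/
def aux1 {G : Type} [Group G] {k : Type} [Field k]
    (α : G → G → G → kˣ) (f g h : G) : kˣ :=
  α f g h * (α (f * g * f⁻¹) f h)⁻¹ * α (f * g * f⁻¹) (f * h * f⁻¹) f

/-- An object of `Z(G,α)`: a `G`-graded vector space (grading given by a complete
orthogonal system of idempotent projections) with an `α`-projective `G`-action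
compatible with the grading. -/
structure ZObj (k : Type) [Field k] (G : Type) [Group G] [Fintype G]
    (α : G → G → G → kˣ) where
  V : Type
  [ac : AddCommGroup V]
  [mo : Module k V]
  p : G → V →ₗ[k] V
  p_idem : ∀ g, p g ∘ₗ p g = p g
  p_orth : ∀ g h, g ≠ h → p g ∘ₗ p h = 0
  p_total : ∑ g : G, p g = LinearMap.id
  ρ : G → V →ₗ[k] V
  ρ_one : ρ 1 = LinearMap.id
  ρ_bij : ∀ g, Function.Bijective (ρ g)
  grade : ∀ g h, ρ g ∘ₗ p h = p (g * h * g⁻¹) ∘ₗ ρ g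
  proj : ∀ g h x, ρ (g * h) ∘ₗ p x
    = ((aux2 α g h x : kˣ) : k) • ((ρ g ∘ₗ ρ h) ∘ₗ p x)

attribute [instance] ZObj.ac ZObj.mo

section TensorData

variable {k : Type} [Field k] {G : Type} [Group G] [Fintype G] [DecidableEq G]
variable {X Y Z : Type} [AddCommGroup X] [Module k X] [AddCommGroup Y] [Module k Y]
  [AddCommGroup Z] [Module k Z]

/-- The grading of the tensor product: `(X⊗Y)_f = ⊕_{f₁f₂=f} X_{f₁} ⊗ Y_{f₂}`. -/
noncomputable def tP (pX : G → X →ₗ[k] X) (pY : G → Y →ₗ[k] Y) (f : G) :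
    X ⊗[k] Y →ₗ[k] X ⊗[k] Y :=
  ∑ q : G × G, if q.1 * q.2 = f then TensorProduct.map (pX q.1) (pY q.2) else 0

/-- The action on the tensor product: `f.(x⊗y) = α(f|g,h)(f.x ⊗ f.y)` for
`x ∈ X_g`, `y ∈ Y_h`. -/
noncomputable def tRho (α : G → G → G → kˣ)
    (pX : G → X →ₗ[k] X) (pY : G → Y →ₗ[k] Y)
    (ρX : G → X →ₗ[k] X) (ρY : G → Y →ₗ[k] Y) (f : G) :
    X ⊗[k] Y →ₗ[k] X ⊗[k] Y :=
  ∑ q : G × G, ((aux1 α f q.1 q.2 : kˣ) : k) •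
    TensorProduct.map (ρX f ∘ₗ pX q.1) (ρY f ∘ₗ pY q.2)

/-- The braiding `c_{X,Y}(x⊗y) = f.y ⊗ x` for `x ∈ X_f`. -/
noncomputable def braidMap (pX : G → X →ₗ[k] X) (ρY : G → Y →ₗ[k] Y) :
    X ⊗[k] Y →ₗ[k] Y ⊗[k] X :=
  ∑ f : G, (TensorProduct.comm k X Y).toLinearMap ∘ₗ
    TensorProduct.map (pX f) (ρY f)

/-- The associator `(X⊗Y)⊗Z → X⊗(Y⊗Z)`, acting by `α(x,y,z)⁻¹` on
`X_x ⊗ Y_y ⊗ Z_z` (the inverse of the structure map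
`x⊗(y⊗z) ↦ α(x,y,z)(x⊗y)⊗z` of `Z(G,α)`). -/
noncomputable def assocF (α : G → G → G → kˣ)
    (pX : G → X →ₗ[k] X) (pY : G → Y →ₗ[k] Y) (pZ : G → Z →ₗ[k] Z) :
    (X ⊗[k] Y) ⊗[k] Z →ₗ[k] X ⊗[k] (Y ⊗[k] Z) :=
  ∑ t : G × G × G, (((α t.1 t.2.1 t.2.2)⁻¹ : kˣ) : k) •
    ((TensorProduct.assoc k X Y Z).toLinearMap ∘ₗ
      TensorProduct.map (TensorProduct.map (pX t.1) (pY t.2.1)) (pZ t.2.2))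

/-- The associator `X⊗(Y⊗Z) → (X⊗Y)⊗Z`, acting by `α(x,y,z)` on
`X_x ⊗ Y_y ⊗ Z_z` (the structure map of `Z(G,α)` in the paper's convention). -/
noncomputable def assocB (α : G → G → G → kˣ)
    (pX : G → X →ₗ[k] X) (pY : G → Y →ₗ[k] Y) (pZ : G → Z →ₗ[k] Z) :
    X ⊗[k] (Y ⊗[k] Z) →ₗ[k] (X ⊗[k] Y) ⊗[k] Z :=
  ∑ t : G × G × G, ((α t.1 t.2.1 t.2.2 : kˣ) : k) •
    ((TensorProduct.assoc k X Y Z).symm.toLinearMap ∘ₗ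
      TensorProduct.map (pX t.1) (TensorProduct.map (pY t.2.1) (pZ t.2.2)))

end TensorData

section Homogeneous

variable {k G V : Type} [Field k] [DecidableEq G] [AddCommGroup V] [Module k V]

def IsHomogeneous (p : G → V →ₗ[k] V) (a : G) (x : V) : Prop :=
  ∀ c, p c x = if c = a then x else 0

theorem IsHomogeneous.apply_self {p : G → V →ₗ[k] V} {a : G} {x : V}
    (hx : IsHomogeneous p a x) : p a x = x := by
  simp [hx a]

end Homogeneous

namespace ZObj

variable {k G : Type} [Field k] [Group G] [Fintype G] {α : G → G → G → kˣ}

theorem sum_p_apply (X : ZObj k G α) (x : X.V) : ∑ g, X.p g x = x := by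
  simpa [LinearMap.sum_apply] using LinearMap.congr_fun X.p_total x

variable [DecidableEq G]

theorem isHomogeneous_p (X : ZObj k G α) (a : G) (x : X.V) : IsHomogeneous X.p a (X.p a x) := by
  intro c
  split_ifs with h
  · subst h
    exact LinearMap.congr_fun (X.p_idem c) x
  · exact LinearMap.congr_fun (X.p_orth c a h) x

theorem isHomogeneous_ρ (X : ZObj k G α) {a : G} {x : X.V} (hx : IsHomogeneous X.p a x)
    (g : G) : IsHomogeneous X.p (g * a * g⁻¹) (X.ρ g x) := by
  intro c
  have h := LinearMap.congr_fun (X.grade g (g⁻¹ * c * g)) x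
  rw [LinearMap.comp_apply, LinearMap.comp_apply, hx,
    show g * (g⁻¹ * c * g) * g⁻¹ = c by group] at h
  rw [← h]
  have hc : g⁻¹ * c * g = a ↔ c = g * a * g⁻¹ := by
    constructor <;> rintro rfl <;> group
  by_cases hca : c = g * a * g⁻¹
  · rw [if_pos (hc.mpr hca), if_pos hca]
  · rw [if_neg (mt hc.mp hca), if_neg hca, map_zero]

theorem ρ_mul_apply (X : ZObj k G α) {a : G} {x : X.V} (hx : IsHomogeneous X.p a x) (g h : G) :
    X.ρ (g * h) x = (aux2 α g h a : k) • X.ρ g (X.ρ h x) := by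
  simpa [hx.apply_self] using LinearMap.congr_fun (X.proj g h a) x

theorem ρ_ρ_apply (X : ZObj k G α) {a : G} {x : X.V} (hx : IsHomogeneous X.p a x) (g h : G) :
    X.ρ g (X.ρ h x) = (((aux2 α g h a)⁻¹ : kˣ) : k) • X.ρ (g * h) x := by
  rw [X.ρ_mul_apply hx, smul_smul, ← Units.val_mul, inv_mul_cancel, Units.val_one, one_smul]

theorem tensor_ext (X Y : ZObj k G α) {W : Type} [AddCommGroup W] [Module k W]
    {L M : X.V ⊗[k] Y.V →ₗ[k] W}
    (h : ∀ (a b : G) (x : X.V) (y : Y.V), IsHomogeneous X.p a x → IsHomogeneous Y.p b y →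
      L (x ⊗ₜ y) = M (x ⊗ₜ y)) : L = M := by
  refine TensorProduct.ext' fun x y => ?_
  rw [← X.sum_p_apply x, ← Y.sum_p_apply y]
  simp only [TensorProduct.sum_tmul, TensorProduct.tmul_sum, map_sum]
  exact Finset.sum_congr rfl fun _ _ => Finset.sum_congr rfl fun _ _ =>
    h _ _ _ _ (X.isHomogeneous_p _ x) (Y.isHomogeneous_p _ y)

theorem tensor_ext₃_left (X Y Z : ZObj k G α) {W : Type} [AddCommGroup W] [Module k W]
    {L M : (X.V ⊗[k] Y.V) ⊗[k] Z.V →ₗ[k] W}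
    (h : ∀ (a b c : G) (x : X.V) (y : Y.V) (z : Z.V),
      IsHomogeneous X.p a x → IsHomogeneous Y.p b y → IsHomogeneous Z.p c z →
      L ((x ⊗ₜ y) ⊗ₜ z) = M ((x ⊗ₜ y) ⊗ₜ z)) : L = M := by
  refine TensorProduct.ext_threefold fun x y z => ?_
  rw [← X.sum_p_apply x, ← Y.sum_p_apply y, ← Z.sum_p_apply z]
  simp only [TensorProduct.sum_tmul, TensorProduct.tmul_sum, map_sum]
  exact Finset.sum_congr rfl fun _ _ => Finset.sum_congr rfl fun _ _ =>
    Finset.sum_congr rfl fun _ _ =>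
      h _ _ _ _ _ _ (X.isHomogeneous_p _ x) (Y.isHomogeneous_p _ y) (Z.isHomogeneous_p _ z)

theorem tensor_ext₃_right (X Y Z : ZObj k G α) {W : Type} [AddCommGroup W] [Module k W]
    {L M : X.V ⊗[k] (Y.V ⊗[k] Z.V) →ₗ[k] W}
    (h : ∀ (a b c : G) (x : X.V) (y : Y.V) (z : Z.V),
      IsHomogeneous X.p a x → IsHomogeneous Y.p b y → IsHomogeneous Z.p c z →
      L (x ⊗ₜ (y ⊗ₜ z)) = M (x ⊗ₜ (y ⊗ₜ z))) : L = M := by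
  have he : Function.Surjective (TensorProduct.assoc k X.V Y.V Z.V).toLinearMap :=
    (TensorProduct.assoc k X.V Y.V Z.V).surjective
  exact (LinearMap.cancel_right he).mp (tensor_ext₃_left X Y Z h)

end ZObj

section TensorApply

variable {k G : Type} [Field k] [Fintype G] [DecidableEq G]
variable {X Y Z : Type} [AddCommGroup X] [Module k X] [AddCommGroup Y] [Module k Y]
  [AddCommGroup Z] [Module k Z]
variable {pX : G → X →ₗ[k] X} {pY : G → Y →ₗ[k] Y} {pZ : G → Z →ₗ[k] Z}
  {a b c : G} {x : X} {y : Y} {z : Z}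

theorem braidMap_tmul (ρY : G → Y →ₗ[k] Y) (hx : IsHomogeneous pX a x) (y : Y) :
    braidMap pX ρY (x ⊗ₜ y) = ρY a y ⊗ₜ[k] x := by
  simp [braidMap, LinearMap.sum_apply, hx _, apply_ite]

theorem assocF_tmul (α : G → G → G → kˣ)
    (hx : IsHomogeneous pX a x) (hy : IsHomogeneous pY b y) (hz : IsHomogeneous pZ c z) :
    assocF α pX pY pZ ((x ⊗ₜ y) ⊗ₜ z) = (((α a b c)⁻¹ : kˣ) : k) • (x ⊗ₜ[k] (y ⊗ₜ[k] z)) := by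
  simp [assocF, LinearMap.sum_apply, hx _, hy _, hz _, Fintype.sum_prod_type, apply_ite,
    TensorProduct.ite_tmul]

theorem assocB_tmul (α : G → G → G → kˣ)
    (hx : IsHomogeneous pX a x) (hy : IsHomogeneous pY b y) (hz : IsHomogeneous pZ c z) :
    assocB α pX pY pZ (x ⊗ₜ (y ⊗ₜ z)) = (α a b c : k) • ((x ⊗ₜ[k] y) ⊗ₜ[k] z) := by
  simp [assocB, LinearMap.sum_apply, hx _, hy _, hz _, Fintype.sum_prod_type, apply_ite,
    TensorProduct.ite_tmul]

variable [Group G]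

theorem tP_tmul (hx : IsHomogeneous pX a x) (hy : IsHomogeneous pY b y) (f : G) :
    tP pX pY f (x ⊗ₜ y) = if a * b = f then x ⊗ₜ[k] y else 0 := by
  rw [tP, LinearMap.sum_apply, Fintype.sum_eq_single (a, b)]
  · simp [DFunLike.ite_apply, hx _, hy _]
  · rintro ⟨c, d⟩ hcd
    simp only [DFunLike.ite_apply, TensorProduct.map_tmul, hx c, hy d]
    aesop

theorem isHomogeneous_tP_tmul (hx : IsHomogeneous pX a x) (hy : IsHomogeneous pY b y) :
    IsHomogeneous (tP pX pY) (a * b) (x ⊗ₜ y) := by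
  intro f
  simp [tP_tmul hx hy, eq_comm]

theorem tRho_tmul (α : G → G → G → kˣ) (ρX : G → X →ₗ[k] X) (ρY : G → Y →ₗ[k] Y)
    (hx : IsHomogeneous pX a x) (hy : IsHomogeneous pY b y) (f : G) :
    tRho α pX pY ρX ρY f (x ⊗ₜ y) = (aux1 α f a b : k) • (ρX f x ⊗ₜ[k] ρY f y) := by
  simp [tRho, LinearMap.sum_apply, hx _, hy _, Fintype.sum_prod_type, apply_ite,
    TensorProduct.ite_tmul]

end TensorApply

section Coefficients

variable {k G : Type} [Field k] [Group G] (α : G → G → G → kˣ)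

theorem aux1_mul_inv_aux2_eq (g a b : G) :
    aux1 α g a b * (aux2 α (g * a * g⁻¹) g b)⁻¹
      = aux1 α g (a * b * a⁻¹) a * (aux2 α g a b)⁻¹ := by
  rw [aux1, aux1, aux2, aux2, show g * a * g⁻¹ * g * b * (g * a * g⁻¹ * g)⁻¹
      = g * (a * b * a⁻¹) * g⁻¹ by group, show g * a * b * (g * a)⁻¹
      = g * (a * b * a⁻¹) * g⁻¹ by group, Units.ext_iff]
  simp only [Units.val_mul, Units.val_inv_eq_inv_val]
  field_simp

theorem inv_mul_aux1_mul_inv_eq (a b c : G) :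
    (α a b c)⁻¹ * aux1 α a b c * (α (a * b * a⁻¹) (a * c * a⁻¹) a)⁻¹
      = (α (a * b * a⁻¹) a c)⁻¹ := by
  rw [aux1, Units.ext_iff]
  simp only [Units.val_mul, Units.val_inv_eq_inv_val]
  field_simp

theorem mul_aux2_mul_eq (a b c : G) :
    α a b c * aux2 α a b c * α (a * (b * c * b⁻¹) * a⁻¹) a b = α a (b * c * b⁻¹) b := by
  rw [aux2, show a * b * c * (a * b)⁻¹ = a * (b * c * b⁻¹) * a⁻¹ by group, Units.ext_iff]
  simp only [Units.val_mul, Units.val_inv_eq_inv_val]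
  field_simp

end Coefficients

section Braiding

variable {k G : Type} [Field k] [Group G] [Fintype G] [DecidableEq G] {α : G → G → G → kˣ}
variable (X Y Z : ZObj k G α)

theorem braidMap_comp_tP (f : G) :
    braidMap X.p Y.ρ ∘ₗ tP X.p Y.p f = tP Y.p X.p f ∘ₗ braidMap X.p Y.ρ := by
  refine X.tensor_ext Y fun a b x y hx hy => ?_
  by_cases hf : a * b = f <;>
    simp [hf, tP_tmul hx hy, braidMap_tmul _ hx, tP_tmul (Y.isHomogeneous_ρ hy a) hx]

theorem braidMap_comp_tRho (g : G) :
    braidMap X.p Y.ρ ∘ₗ tRho α X.p Y.p X.ρ Y.ρ g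
      = tRho α Y.p X.p Y.ρ X.ρ g ∘ₗ braidMap X.p Y.ρ := by
  refine X.tensor_ext Y fun a b x y hx hy => ?_
  simp only [LinearMap.comp_apply]
  rw [tRho_tmul α _ _ hx hy, map_smul, braidMap_tmul _ (X.isHomogeneous_ρ hx g),
    braidMap_tmul _ hx, tRho_tmul α _ _ (Y.isHomogeneous_ρ hy a) hx,
    Y.ρ_ρ_apply hy, Y.ρ_ρ_apply hy, show g * a * g⁻¹ * g = g * a by group,
    TensorProduct.smul_tmul', TensorProduct.smul_tmul', smul_smul, smul_smul,
    ← Units.val_mul, ← Units.val_mul, aux1_mul_inv_aux2_eq]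

theorem hexagon_assocF :
    assocF α Y.p Z.p X.p ∘ₗ braidMap X.p (tRho α Y.p Z.p Y.ρ Z.ρ) ∘ₗ assocF α X.p Y.p Z.p
      = TensorProduct.map LinearMap.id (braidMap X.p Z.ρ) ∘ₗ assocF α Y.p X.p Z.p ∘ₗ
          TensorProduct.map (braidMap X.p Y.ρ) LinearMap.id := by
  refine X.tensor_ext₃_left Y Z fun a b c x y z hx hy hz => ?_
  simp only [LinearMap.comp_apply, TensorProduct.map_tmul, LinearMap.id_coe, id_eq]
  rw [assocF_tmul α hx hy hz, map_smul, map_smul, braidMap_tmul _ hx, tRho_tmul α _ _ hy hz,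
    ← TensorProduct.smul_tmul', map_smul,
    assocF_tmul α (Y.isHomogeneous_ρ hy a) (Z.isHomogeneous_ρ hz a) hx, braidMap_tmul _ hx,
    assocF_tmul α (Y.isHomogeneous_ρ hy a) hx hz, map_smul, TensorProduct.map_tmul,
    LinearMap.id_coe, id_eq, braidMap_tmul _ hx, smul_smul, smul_smul,
    ← Units.val_mul, ← Units.val_mul, inv_mul_aux1_mul_inv_eq]

theorem hexagon_assocB :
    assocB α Z.p X.p Y.p ∘ₗ braidMap (tP X.p Y.p) Z.ρ ∘ₗ assocB α X.p Y.p Z.p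
      = TensorProduct.map (braidMap X.p Z.ρ) LinearMap.id ∘ₗ assocB α X.p Z.p Y.p ∘ₗ
          TensorProduct.map LinearMap.id (braidMap Y.p Z.ρ) := by
  refine X.tensor_ext₃_right Y Z fun a b c x y z hx hy hz => ?_
  simp only [LinearMap.comp_apply, TensorProduct.map_tmul, LinearMap.id_coe, id_eq]
  rw [assocB_tmul α hx hy hz, map_smul, map_smul, braidMap_tmul _ (isHomogeneous_tP_tmul hx hy),
    Z.ρ_mul_apply hz a b, ← TensorProduct.smul_tmul', map_smul,
    assocB_tmul α (Z.isHomogeneous_ρ (Z.isHomogeneous_ρ hz b) a) hx hy, braidMap_tmul _ hy,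
    assocB_tmul α hx (Z.isHomogeneous_ρ hz b) hy, map_smul, TensorProduct.map_tmul,
    LinearMap.id_coe, id_eq, braidMap_tmul _ hx, smul_smul, smul_smul,
    ← Units.val_mul, ← Units.val_mul, mul_aux2_mul_eq]

end Braiding

theorem stmt3_general {k : Type} [Field k] {G : Type} [Group G] [Fintype G] [DecidableEq G]
    (α : G → G → G → kˣ)
    (X Y Z : ZObj k G α) :
    -- the braiding preserves the grading
    (∀ f : G, braidMap X.p Y.ρ ∘ₗ tP X.p Y.p f
        = tP Y.p X.p f ∘ₗ braidMap X.p Y.ρ) ∧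
    -- the braiding is equivariant for the (projective) action
    (∀ g : G, braidMap X.p Y.ρ ∘ₗ tRho α X.p Y.p X.ρ Y.ρ g
        = tRho α Y.p X.p Y.ρ X.ρ g ∘ₗ braidMap X.p Y.ρ) ∧
    -- hexagon axiom (forward)
    (assocF α Y.p Z.p X.p ∘ₗ
        braidMap X.p (tRho α Y.p Z.p Y.ρ Z.ρ) ∘ₗ assocF α X.p Y.p Z.p
      = TensorProduct.map LinearMap.id (braidMap X.p Z.ρ) ∘ₗ
          assocF α Y.p X.p Z.p ∘ₗ
          TensorProduct.map (braidMap X.p Y.ρ) LinearMap.id) ∧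
    -- hexagon axiom (reverse)
    (assocB α Z.p X.p Y.p ∘ₗ
        braidMap (tP X.p Y.p) Z.ρ ∘ₗ assocB α X.p Y.p Z.p
      = TensorProduct.map (braidMap X.p Z.ρ) LinearMap.id ∘ₗ
          assocB α X.p Z.p Y.p ∘ₗ
          TensorProduct.map LinearMap.id (braidMap Y.p Z.ρ)) :=
  ⟨braidMap_comp_tP X Y, braidMap_comp_tRho X Y, hexagon_assocF X Y Z, hexagon_assocB X Y Z⟩

/-- the data of `Z(G,α)` — `G`-graded vector spaces with `α`-projective
`G`-action, tensor product with action twisted by `α(f|g,h)`, associator given by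
`α(f,g,h)`, and braiding `c(x⊗y) = f.y ⊗ x` for `x ∈ X_f` — satisfy the axioms of a
braided monoidal category: the braiding is a morphism in `Z(G,α)` (compatible with
the grading and the action of the tensor product) and the two hexagon axioms hold. -/
theorem stmt3 {k : Type} [Field k] {G : Type} [Group G] [Fintype G] [DecidableEq G]
    (α : G → G → G → kˣ)
    (hcoc : ∀ f g h l : G,
      α g h l * α f (g * h) l * α f g h = α (f * g) h l * α f g (h * l))
    (hnorm : ∀ f g h : G, f = 1 ∨ g = 1 ∨ h = 1 → α f g h = 1)
    (X Y Z : ZObj k G α) :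
    -- the braiding preserves the grading
    (∀ f : G, braidMap X.p Y.ρ ∘ₗ tP X.p Y.p f
        = tP Y.p X.p f ∘ₗ braidMap X.p Y.ρ) ∧
    -- the braiding is equivariant for the (projective) action
    (∀ g : G, braidMap X.p Y.ρ ∘ₗ tRho α X.p Y.p X.ρ Y.ρ g
        = tRho α Y.p X.p Y.ρ X.ρ g ∘ₗ braidMap X.p Y.ρ) ∧
    -- hexagon axiom (forward)
    (assocF α Y.p Z.p X.p ∘ₗ
        braidMap X.p (tRho α Y.p Z.p Y.ρ Z.ρ) ∘ₗ assocF α X.p Y.p Z.p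
      = TensorProduct.map LinearMap.id (braidMap X.p Z.ρ) ∘ₗ
          assocF α Y.p X.p Z.p ∘ₗ
          TensorProduct.map (braidMap X.p Y.ρ) LinearMap.id) ∧
    -- hexagon axiom (reverse)
    (assocB α Z.p X.p Y.p ∘ₗ
        braidMap (tP X.p Y.p) Z.ρ ∘ₗ assocB α X.p Y.p Z.p
      = TensorProduct.map (braidMap X.p Z.ρ) LinearMap.id ∘ₗ
          assocB α X.p Z.p Y.p ∘ₗ
          TensorProduct.map LinearMap.id (braidMap Y.p Z.ρ)) :=
  stmt3_general α X Y Z
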